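/- Let p be an idempotent ultrafilter on a commutative semigroup X, let Y, Y', Z be commutative groups, and let (y,y') ↦ y·y' be a bi-additive map Y × Y' → Z. If f ∈ A^p(X,Y) and f' ∈ A^p(X,Y') are p-almost polynomials, then the pointwise product f·f' : X → Z is a p-almost polynomial with deg^p(f·f') ≤ deg^p f + deg^p f' and C(f·f') = C(f)·C(f'). -/

import Mathlib

open Filter

namespace AP

variable {X : Type*} [AddCommSemigroup X] {Y : Type*} [AddCommGroup Y]

/-- The relativised difference operator `Δ̄ₐ f (x) = f (x + a) - f x - f a`. -/
def Dbar (a : X) (f : X → Y) : X → Y := fun x => f (x + a) - f x - f a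

/-- The iterated difference `Δ̄^d f (m_0, …, m_d)`, where the first argument `w 0` is the
parameter of the outermost difference and the last argument is the evaluation point. -/
def DeltaFull : ∀ (d : ℕ), (X → Y) → (Fin (d + 1) → X) → Y
  | 0, f, w => f (w 0)
  | d + 1, f, w => DeltaFull d (Dbar (w 0) f) fun i => w i.succ

/-- The iterated `p`-limit of a function of `r` variables, taken in the discrete topology on the
target: the limit exists with value `c` iff, iteratively, the value is `c` `p`-almost
everywhere.  The outermost limit is taken over the first variable. -/
def IterLim {Z : Type*} (p : Ultrafilter X) : ∀ (r : ℕ), ((Fin r → X) → Z) → Z → Prop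
  | 0, g, c => g (fun i => i.elim0) = c
  | r + 1, g, c => ∀ᶠ a in (p : Filter X), IterLim p r (fun v => g (Fin.cons a v)) c

/-- `HasC p d f c` asserts that the constant
`C_d(f) = (-1)^d ⋅ p-lim_{m_0,…,m_d} Δ̄^d f (m_0,…,m_d)` exists and equals `c`. -/
def HasC (p : Ultrafilter X) (d : ℕ) (f : X → Y) (c : Y) : Prop :=
  IterLim p (d + 1) (DeltaFull d f) (((-1 : ℤ) ^ d) • c)

/-- `f` is a `p`-almost polynomial of degree at most `d`: for `d = 0` this means `f` is constant
`p`-a.e. (degree `-∞` corresponding to the constant `0`), and for `d + 1` it means that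
`Δ̄ₐ f` has degree at most `d` for `p`-almost all `a`. -/
def APdegLE (p : Ultrafilter X) : ℕ → (X → Y) → Prop
  | 0, f => ∃ c, ∀ᶠ x in (p : Filter X), f x = c
  | d + 1, f => ∀ᶠ a in (p : Filter X), APdegLE p d (Dbar a f)

/-- Addition of ultrafilters: `A ∈ p + q` iff `∀ᶠ m in p, ∀ᶠ n in q, n + m ∈ A`, so that
`(p+q)-lim_n g n = p-lim_m q-lim_n g (n + m)`. -/
def UFAdd (p q : Ultrafilter X) : Ultrafilter X := p.bind fun m => q.map fun n => n + m

/-- An ultrafilter is idempotent if `p + p = p`. -/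
def IsIdem (p : Ultrafilter X) : Prop := UFAdd p p = p

end AP


set_option linter.unusedSectionVars false
set_option linter.unusedVariables false

namespace AP

variable {X : Type*} [AddCommSemigroup X] {Y : Type*} [AddCommGroup Y]
variable {Z : Type*} [AddCommGroup Z] {p : Ultrafilter X}

lemma idem_ae (hp : IsIdem p) {P : X → Prop}
    (h : ∀ᶠ x in (p:Filter X), P x) :
    ∀ᶠ a in (p:Filter X), ∀ᶠ x in (p:Filter X), P (x + a) := by
  have h2 : {x | P x} ∈ (UFAdd p p : Filter X) := by rw [hp]; exact h
  exact h2

/-! ### Basic `Dbar` identities -/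

lemma Dbar_add (a : X) (g h : X → Y) :
    Dbar a (fun x => g x + h x) = fun x => Dbar a g x + Dbar a h x := by
  funext x; simp only [Dbar]; abel

lemma Dbar_neg (a : X) (g : X → Y) :
    Dbar a (fun x => -g x) = fun x => -Dbar a g x := by
  funext x; simp only [Dbar]; abel

lemma Dbar_const (a : X) (k : Y) :
    Dbar a (fun _ => k) = fun _ => -k := by
  funext x; simp only [Dbar]; abel

lemma Dbar_comp (a : X) (φ : Y →+ Z) (f : X → Y) :
    Dbar a (fun x => φ (f x)) = fun x => φ (Dbar a f x) := by
  funext x; simp only [Dbar, map_sub]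

lemma Dbar_shift (a b : X) (g : X → Y) :
    Dbar b (fun x => g (x + a)) = fun x => Dbar (b + a) g x - Dbar a g x - g a := by
  funext x
  have h1 : x + b + a = x + (b + a) := add_assoc x b a
  simp only [Dbar, h1]
  abel

/-! ### `HasC` unfolding -/

lemma hasC_zero_iff {f : X → Y} {c : Y} :
    HasC p 0 f c ↔ ∀ᶠ a in (p:Filter X), f a = c := by
  simp [HasC, IterLim, DeltaFull]

lemma iterLim_succ_iff {Z : Type*} {r : ℕ} {g : (Fin (r+1) → X) → Z} {c : Z} :
    IterLim p (r+1) g c ↔ ∀ᶠ a in (p:Filter X), IterLim p r (fun v => g (Fin.cons a v)) c :=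
  Iff.rfl

lemma hasC_succ_iff {d : ℕ} {f : X → Y} {c : Y} :
    HasC p (d+1) f c ↔ ∀ᶠ a in (p:Filter X), HasC p d (Dbar a f) (-c) := by
  rw [HasC, iterLim_succ_iff]
  refine eventually_congr (Eventually.of_forall fun a => ?_)
  have h1 : (fun v => DeltaFull (d+1) f (Fin.cons a v)) = DeltaFull d (Dbar a f) := by
    funext v
    simp only [DeltaFull, Fin.cons_zero, Fin.cons_succ]
  have h2 : ((-1 : ℤ) ^ (d+1)) • c = ((-1 : ℤ) ^ d) • (-c) := by
    rw [pow_succ, mul_smul]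
    simp
  rw [h1, h2, HasC]

/-! ### `HasC` calculus -/

lemma hasC_congr (hp : IsIdem p) {d : ℕ} {g h : X → Y} {u : Y}
    (hgh : ∀ᶠ x in (p:Filter X), g x = h x) (hg : HasC p d g u) : HasC p d h u := by
  induction d generalizing g h u with
  | zero =>
    rw [hasC_zero_iff] at hg ⊢
    filter_upwards [hg, hgh] with a h1 h2
    rw [← h2, h1]
  | succ d ih =>
    rw [hasC_succ_iff] at hg ⊢
    filter_upwards [hg, hgh, idem_ae hp hgh] with a h1 h2 h3
    refine ih ?_ h1
    filter_upwards [hgh, h3] with x h4 h5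
    simp only [Dbar, h2, h4, h5]

lemma hasC_add {d : ℕ} {g h : X → Y} {u v : Y}
    (hg : HasC p d g u) (hh : HasC p d h v) :
    HasC p d (fun x => g x + h x) (u + v) := by
  induction d generalizing g h u v with
  | zero =>
    rw [hasC_zero_iff] at hg hh ⊢
    filter_upwards [hg, hh] with a h1 h2
    rw [h1, h2]
  | succ d ih =>
    rw [hasC_succ_iff] at hg hh ⊢
    filter_upwards [hg, hh] with a h1 h2
    rw [Dbar_add]
    have := ih h1 h2
    rwa [← neg_add] at this

lemma hasC_comp {d : ℕ} (φ : Y →+ Z) {g : X → Y} {u : Y} (hg : HasC p d g u) :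
    HasC p d (fun x => φ (g x)) (φ u) := by
  induction d generalizing g u with
  | zero =>
    rw [hasC_zero_iff] at hg ⊢
    filter_upwards [hg] with a h1; rw [h1]
  | succ d ih =>
    rw [hasC_succ_iff] at hg ⊢
    filter_upwards [hg] with a h1
    rw [Dbar_comp]
    have := ih h1
    rwa [map_neg] at this

lemma hasC_neg {d : ℕ} {g : X → Y} {u : Y} (hg : HasC p d g u) :
    HasC p d (fun x => -g x) (-u) :=
  hasC_comp (negAddMonoidHom) hg

lemma hasC_sub {d : ℕ} {g h : X → Y} {u v : Y}
    (hg : HasC p d g u) (hh : HasC p d h v) :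
    HasC p d (fun x => g x - h x) (u - v) := by
  have := hasC_add hg (hasC_neg hh)
  simpa [sub_eq_add_neg] using this

lemma hasC_const {d : ℕ} (k : Y) : HasC p d (fun _ => k) k := by
  induction d generalizing k with
  | zero => rw [hasC_zero_iff]; exact Eventually.of_forall fun _ => rfl
  | succ d ih =>
    rw [hasC_succ_iff]
    refine Eventually.of_forall fun a => ?_
    rw [Dbar_const]
    exact ih (-k)

lemma hasC_shift (hp : IsIdem p) {d : ℕ} {g : X → Y} {u : Y} (hg : HasC p d g u) :
    ∀ᶠ a in (p:Filter X), HasC p d (fun x => g (x + a)) (g a) := by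
  cases d with
  | zero =>
    rw [hasC_zero_iff] at hg
    filter_upwards [hg, idem_ae hp hg] with a h1 h2
    rw [hasC_zero_iff]
    filter_upwards [h2] with x h3
    rw [h3, h1]
  | succ d =>
    rw [hasC_succ_iff] at hg
    filter_upwards [hg, idem_ae hp hg] with a h1 h2
    rw [hasC_succ_iff]
    filter_upwards [h2] with b h3
    rw [Dbar_shift]
    have := hasC_sub (hasC_sub h3 h1) (hasC_const (g a))
    have he : -u - -u - g a = -(g a) := by abel
    rwa [he] at this

lemma hasC_up (hp : IsIdem p) {d : ℕ} {g : X → Y} {u : Y} (hg : HasC p d g u) :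
    HasC p (d + 1) g u := by
  rw [hasC_succ_iff]
  filter_upwards [hasC_shift hp hg] with a h1
  have : Dbar a g = fun x => g (x + a) - g x - g a := rfl
  rw [this]
  have := hasC_sub (hasC_sub h1 hg) (hasC_const (g a))
  have he : g a - u - g a = -u := by abel
  rwa [he] at this

lemma hasC_le (hp : IsIdem p) {d e : ℕ} (hde : d ≤ e) {g : X → Y} {u : Y}
    (hg : HasC p d g u) : HasC p e g u := by
  induction hde with
  | refl => exact hg
  | step _ ih => exact hasC_up hp ih

/-! ### degree calculus -/

lemma degLE_zero_iff {f : X → Y} :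
    APdegLE p 0 f ↔ ∃ c, ∀ᶠ x in (p:Filter X), f x = c := Iff.rfl

lemma degLE_succ_iff {d : ℕ} {f : X → Y} :
    APdegLE p (d+1) f ↔ ∀ᶠ a in (p:Filter X), APdegLE p d (Dbar a f) := Iff.rfl

lemma degLE_congr (hp : IsIdem p) {d : ℕ} {g h : X → Y}
    (hgh : ∀ᶠ x in (p:Filter X), g x = h x) (hg : APdegLE p d g) : APdegLE p d h := by
  induction d generalizing g h with
  | zero =>
    obtain ⟨c, hc⟩ := hg
    refine ⟨c, ?_⟩
    filter_upwards [hc, hgh] with x h1 h2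
    rw [← h2, h1]
  | succ d ih =>
    rw [degLE_succ_iff] at hg ⊢
    filter_upwards [hg, hgh, idem_ae hp hgh] with a h1 h2 h3
    refine ih ?_ h1
    filter_upwards [hgh, h3] with x h4 h5
    simp only [Dbar, h2, h4, h5]

lemma degLE_add (hp : IsIdem p) {d : ℕ} {g h : X → Y}
    (hg : APdegLE p d g) (hh : APdegLE p d h) :
    APdegLE p d (fun x => g x + h x) := by
  induction d generalizing g h with
  | zero =>
    obtain ⟨c, hc⟩ := hg
    obtain ⟨c', hc'⟩ := hh
    refine ⟨c + c', ?_⟩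
    filter_upwards [hc, hc'] with x h1 h2
    rw [h1, h2]
  | succ d ih =>
    rw [degLE_succ_iff] at hg hh ⊢
    filter_upwards [hg, hh] with a h1 h2
    rw [Dbar_add]
    exact ih h1 h2

lemma degLE_comp {d : ℕ} (φ : Y →+ Z) {g : X → Y} (hg : APdegLE p d g) :
    APdegLE p d (fun x => φ (g x)) := by
  induction d generalizing g with
  | zero =>
    obtain ⟨c, hc⟩ := hg
    exact ⟨φ c, by filter_upwards [hc] with x h1; rw [h1]⟩
  | succ d ih =>
    rw [degLE_succ_iff] at hg ⊢
    filter_upwards [hg] with a h1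
    rw [Dbar_comp]
    exact ih h1

lemma degLE_const {d : ℕ} (k : Y) : APdegLE p d (fun _ => k) := by
  induction d generalizing k with
  | zero => exact ⟨k, Eventually.of_forall fun _ => rfl⟩
  | succ d ih =>
    rw [degLE_succ_iff]
    refine Eventually.of_forall fun a => ?_
    rw [Dbar_const]
    exact ih (-k)

lemma degLE_up (hp : IsIdem p) {d : ℕ} {g : X → Y} (hg : APdegLE p d g) :
    APdegLE p (d + 1) g := by
  induction d generalizing g with
  | zero =>
    obtain ⟨c, hc⟩ := hg
    rw [degLE_succ_iff]
    filter_upwards [hc, idem_ae hp hc] with a h1 h2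
    refine ⟨-c, ?_⟩
    filter_upwards [hc, h2] with x h3 h4
    simp only [Dbar, h1, h3, h4]
    abel
  | succ d ih =>
    rw [degLE_succ_iff] at hg ⊢
    filter_upwards [hg] with a h1
    exact ih h1

lemma degLE_le (hp : IsIdem p) {d e : ℕ} (hde : d ≤ e) {g : X → Y}
    (hg : APdegLE p d g) : APdegLE p e g := by
  induction hde with
  | refl => exact hg
  | step _ ih => exact degLE_up hp ih

/-! ### products -/

variable {Y' : Type*} [AddCommGroup Y']

lemma Dbar_prod (B : Y →+ Y' →+ Z) (f : X → Y) (f' : X → Y') (a : X) :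
    Dbar a (fun x => B (f x) (f' x)) = fun x =>
      B (Dbar a f x) (Dbar a f' x) + B (Dbar a f x) (f' x) + B (Dbar a f x) (f' a)
      + B (f x) (Dbar a f' x) + B (f x) (f' a) + B (f a) (Dbar a f' x) + B (f a) (f' x) := by
  funext x
  simp only [Dbar, map_sub, AddMonoidHom.sub_apply, map_add, AddMonoidHom.add_apply]
  abel

lemma degLE_prod (hp : IsIdem p) (B : Y →+ Y' →+ Z) :
    ∀ (n d d' : ℕ) (f : X → Y) (f' : X → Y'), d + d' ≤ n →
      APdegLE p d f → APdegLE p d' f' →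
      APdegLE p (d + d') (fun x => B (f x) (f' x)) := by
  intro n
  induction n with
  | zero =>
    intro d d' f f' hn hf hf'
    obtain ⟨rfl, rfl⟩ : d = 0 ∧ d' = 0 := by omega
    obtain ⟨c, hc⟩ := hf
    obtain ⟨c', hc'⟩ := hf'
    refine ⟨B c c', ?_⟩
    filter_upwards [hc, hc'] with x h1 h2
    rw [h1, h2]
  | succ m ih =>
    intro d d' f f' hn hf hf'
    match d, d' with
    | 0, d' =>
      obtain ⟨c, hc⟩ := hf
      have h1 : APdegLE p d' (fun x => B c (f' x)) := degLE_comp (B c) hf'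
      have h2 : APdegLE p d' (fun x => B (f x) (f' x)) :=
        degLE_congr hp (by filter_upwards [hc] with x h3; rw [h3]) h1
      simpa using h2
    | d + 1, 0 =>
      obtain ⟨c', hc'⟩ := hf'
      have h1 : APdegLE p (d + 1) (fun x => B.flip c' (f x)) := degLE_comp (B.flip c') hf
      have h2 : APdegLE p (d + 1) (fun x => B (f x) (f' x)) :=
        degLE_congr hp (by filter_upwards [hc'] with x h3; simp [h3]) h1
      simpa using h2
    | e + 1, e' + 1 =>
      rw [show e + 1 + (e' + 1) = (e + e' + 1) + 1 by omega]
      rw [degLE_succ_iff] at hf hf' ⊢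
      filter_upwards [hf, hf'] with a hfa hf'a
      rw [Dbar_prod B f f' a]
      have hf1 : APdegLE p (e + 1) f := by rw [degLE_succ_iff]; exact hf
      have hf'1 : APdegLE p (e' + 1) f' := by rw [degLE_succ_iff]; exact hf'
      have t1 : APdegLE p (e + e' + 1)
          (fun x => B (Dbar a f x) (Dbar a f' x)) :=
        degLE_up hp (ih e e' _ _ (by omega) hfa hf'a)
      have t2 : APdegLE p (e + e' + 1) (fun x => B (Dbar a f x) (f' x)) := by
        have := ih e (e' + 1) _ _ (by omega) hfa hf'1
        rwa [show e + (e' + 1) = e + e' + 1 by omega] at this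
      have t3 : APdegLE p (e + e' + 1) (fun x => B (Dbar a f x) (f' a)) :=
        degLE_le hp (by omega) (degLE_comp (B.flip (f' a)) hfa)
      have t4 : APdegLE p (e + e' + 1) (fun x => B (f x) (Dbar a f' x)) := by
        have := ih (e + 1) e' _ _ (by omega) hf1 hf'a
        rwa [show (e + 1) + e' = e + e' + 1 by omega] at this
      have t5 : APdegLE p (e + e' + 1) (fun x => B (f x) (f' a)) :=
        degLE_le hp (by omega) (degLE_comp (B.flip (f' a)) hf1)
      have t6 : APdegLE p (e + e' + 1) (fun x => B (f a) (Dbar a f' x)) :=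
        degLE_le hp (by omega) (degLE_comp (B (f a)) hf'a)
      have t7 : APdegLE p (e + e' + 1) (fun x => B (f a) (f' x)) :=
        degLE_le hp (by omega) (degLE_comp (B (f a)) hf'1)
      exact degLE_add hp (degLE_add hp (degLE_add hp (degLE_add hp (degLE_add hp
        (degLE_add hp t1 t2) t3) t4) t5) t6) t7

lemma hasC_prod (hp : IsIdem p) (B : Y →+ Y' →+ Z) :
    ∀ (n d d' : ℕ) (f : X → Y) (f' : X → Y') (c : Y) (c' : Y'), d + d' ≤ n →
      HasC p d f c → HasC p d' f' c' →
      HasC p (d + d') (fun x => B (f x) (f' x)) (B c c') := by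
  intro n
  induction n with
  | zero =>
    intro d d' f f' c c' hn hf hf'
    obtain ⟨rfl, rfl⟩ : d = 0 ∧ d' = 0 := by omega
    rw [hasC_zero_iff] at hf hf' ⊢
    filter_upwards [hf, hf'] with x h1 h2
    rw [h1, h2]
  | succ m ih =>
    intro d d' f f' c c' hn hf hf'
    match d, d' with
    | 0, d' =>
      rw [hasC_zero_iff] at hf
      have h1 : HasC p d' (fun x => B c (f' x)) (B c c') := hasC_comp (B c) hf'
      have h2 : HasC p d' (fun x => B (f x) (f' x)) (B c c') :=
        hasC_congr hp (by filter_upwards [hf] with x h3; rw [h3]) h1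
      simpa using h2
    | d + 1, 0 =>
      rw [hasC_zero_iff] at hf'
      have h1 : HasC p (d + 1) (fun x => B.flip c' (f x)) (B.flip c' c) :=
        hasC_comp (B.flip c') hf
      have h2 : HasC p (d + 1) (fun x => B (f x) (f' x)) (B.flip c' c) :=
        hasC_congr hp (by filter_upwards [hf'] with x h3; simp [h3]) h1
      simpa using h2
    | e + 1, e' + 1 =>
      rw [show e + 1 + (e' + 1) = (e + e' + 1) + 1 by omega]
      rw [hasC_succ_iff] at hf hf' ⊢
      filter_upwards [hf, hf'] with a hfa hf'a
      rw [Dbar_prod B f f' a]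
      have hf1 : HasC p (e + 1) f c := by rw [hasC_succ_iff]; exact hf
      have hf'1 : HasC p (e' + 1) f' c' := by rw [hasC_succ_iff]; exact hf'
      have t1 : HasC p (e + e' + 1)
          (fun x => B (Dbar a f x) (Dbar a f' x)) (B (-c) (-c')) :=
        hasC_up hp (ih e e' _ _ _ _ (by omega) hfa hf'a)
      have t2 : HasC p (e + e' + 1) (fun x => B (Dbar a f x) (f' x)) (B (-c) c') := by
        have := ih e (e' + 1) _ _ _ _ (by omega) hfa hf'1
        rwa [show e + (e' + 1) = e + e' + 1 by omega] at this
      have t3 : HasC p (e + e' + 1) (fun x => B (Dbar a f x) (f' a)) (B.flip (f' a) (-c)) :=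
        hasC_le hp (by omega) (hasC_comp (B.flip (f' a)) hfa)
      have t4 : HasC p (e + e' + 1) (fun x => B (f x) (Dbar a f' x)) (B c (-c')) := by
        have := ih (e + 1) e' _ _ _ _ (by omega) hf1 hf'a
        rwa [show (e + 1) + e' = e + e' + 1 by omega] at this
      have t5 : HasC p (e + e' + 1) (fun x => B (f x) (f' a)) (B.flip (f' a) c) :=
        hasC_le hp (by omega) (hasC_comp (B.flip (f' a)) hf1)
      have t6 : HasC p (e + e' + 1) (fun x => B (f a) (Dbar a f' x)) (B (f a) (-c')) :=
        hasC_le hp (by omega) (hasC_comp (B (f a)) hf'a)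
      have t7 : HasC p (e + e' + 1) (fun x => B (f a) (f' x)) (B (f a) c') :=
        hasC_le hp (by omega) (hasC_comp (B (f a)) hf'1)
      have hsum := hasC_add (hasC_add (hasC_add (hasC_add (hasC_add
        (hasC_add t1 t2) t3) t4) t5) t6) t7
      have hval : B (-c) (-c') + B (-c) c' + B.flip (f' a) (-c) + B c (-c')
          + B.flip (f' a) c + B (f a) (-c') + B (f a) c' = -(B c c') := by
        simp only [map_neg, AddMonoidHom.neg_apply, AddMonoidHom.flip_apply]
        abel
      rwa [hval] at hsum

end AP

/-- for a bi-additive map `Y × Y' → Z`, the pointwise product of `p`-almost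
polynomials is a `p`-almost polynomial, with `deg (f·f') ≤ deg f + deg f'` and
`C(f·f') = C(f)·C(f')`. -/
theorem stmt_8 {X : Type*} [AddCommSemigroup X] {Y Y' Z : Type*}
    [AddCommGroup Y] [AddCommGroup Y'] [AddCommGroup Z]
    (p : Ultrafilter X) (hp : AP.IsIdem p) (B : Y →+ Y' →+ Z)
    (f : X → Y) (f' : X → Y') (d d' : ℕ)
    (hf : AP.APdegLE p d f) (hf' : AP.APdegLE p d' f') :
    AP.APdegLE p (d + d') (fun x => B (f x) (f' x)) ∧
    ∀ (c : Y) (c' : Y'), AP.HasC p d f c → AP.HasC p d' f' c' →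
      AP.HasC p (d + d') (fun x => B (f x) (f' x)) (B c c') :=
  ⟨AP.degLE_prod hp B (d + d') d d' f f' le_rfl hf hf',
   fun c c' hc hc' => AP.hasC_prod hp B (d + d') d d' f f' c c' le_rfl hc hc'⟩
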